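/- arXiv:1811.02481 — 3 statements merged into one kernel-verified Lean document; each statement's English description precedes it below -/
import Mathlib

section
/- Let P be a finite partially ordered set and x ≤ y elements of P. Then the Möbius function of the incidence algebra satisfies μ(x,y) = ∑_{k ≥ 0} (−1)^k c_k(x,y), where c_k(x,y) is the number of chains x = x_0 < x_1 < ⋯ < x_k = y in P. -/
open IncidenceAlgebra Finset

set_option linter.unusedSectionVars false

section Aux

variable {P : Type*} [PartialOrder P] [Fintype P] [LocallyFiniteOrder P] [DecidableEq P]

/-- The number of chains `x = c₀ < c₁ < ⋯ < c_k = y`. -/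
private noncomputable def cc (k : ℕ) (x y : P) : ℕ :=
  Nat.card {c : Fin (k + 1) → P // StrictMono c ∧ c 0 = x ∧ c (Fin.last k) = y}

private lemma nat_card_sigma {ι : Type*} [Fintype ι] (T : ι → Type*) [∀ i, Finite (T i)] :
    Nat.card (Σ i, T i) = ∑ i, Nat.card (T i) := by
  classical
  letI : ∀ i, Fintype (T i) := fun i => Fintype.ofFinite _
  simp [Nat.card_eq_fintype_card, Fintype.card_sigma]

private lemma cc_zero (x y : P) : cc 0 x y = if x = y then 1 else 0 := by
  unfold cc
  split_ifs with h
  · subst h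
    rw [Nat.card_eq_one_iff_unique]
    constructor
    · constructor
      rintro ⟨c, -, hc0, -⟩ ⟨d, -, hd0, -⟩
      ext i
      have hi := i.isLt
      have : i = 0 := Fin.ext (by omega)
      simp [this, hc0, hd0]
    · refine ⟨⟨fun _ => x, ?_, rfl, rfl⟩⟩
      intro i j hij
      have hi := i.isLt
      have hj := j.isLt
      exact absurd (Fin.lt_def.mp hij) (by omega)
  · haveI : IsEmpty {c : Fin (0 + 1) → P // StrictMono c ∧ c 0 = x ∧ c (Fin.last 0) = y} := by
      constructor
      rintro ⟨c, -, hc0, hcl⟩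
      exact h (hc0 ▸ hcl ▸ rfl)
    exact Nat.card_of_isEmpty

private lemma cc_vanish (k : ℕ) (hk : Fintype.card P ≤ k) (x y : P) : cc k x y = 0 := by
  have : IsEmpty {c : Fin (k + 1) → P // StrictMono c ∧ c 0 = x ∧ c (Fin.last k) = y} := by
    constructor
    rintro ⟨c, hc, -, -⟩
    have := Fintype.card_le_of_injective c hc.injective
    simp only [Fintype.card_fin] at this
    omega
  simp [cc, Nat.card_of_isEmpty]

/-- Chains of length `k+1` from `x` to `y` are pairs of a `z ∈ [x, y)` and a chain of length `k`
from `x` to `z`. -/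
private def chainEquiv (k : ℕ) (x y : P) :
    {c : Fin (k + 2) → P // StrictMono c ∧ c 0 = x ∧ c (Fin.last (k + 1)) = y} ≃
      Σ z : (Ico x y : Finset P),
        {c : Fin (k + 1) → P // StrictMono c ∧ c 0 = x ∧ c (Fin.last k) = (z : P)} where
  toFun := fun ⟨c, hm, h0, hl⟩ =>
    ⟨⟨c (Fin.castSucc (Fin.last k)), by
        rw [mem_Ico]
        refine ⟨h0 ▸ hm.monotone (Fin.zero_le _), hl ▸ hm ?_⟩
        exact Fin.castSucc_lt_last _⟩,
      ⟨c ∘ Fin.castSucc, hm.comp Fin.strictMono_castSucc, by simpa using h0, rfl⟩⟩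
  invFun := fun ⟨⟨z, hz⟩, ⟨c, hm, h0, hl⟩⟩ =>
    ⟨Fin.snoc c y, by
      refine ⟨?_, ?_, ?_⟩
      · intro i j hij
        rcases Fin.eq_castSucc_or_eq_last j with ⟨j', rfl⟩ | rfl
        · rcases Fin.eq_castSucc_or_eq_last i with ⟨i', rfl⟩ | rfl
          · simp only [Fin.snoc_castSucc]
            exact hm (by exact_mod_cast hij)
          · exact absurd hij (not_lt.2 (Fin.le_last _))
        · rcases Fin.eq_castSucc_or_eq_last i with ⟨i', rfl⟩ | rfl
          · simp only [Fin.snoc_castSucc, Fin.snoc_last]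
            calc c i' ≤ c (Fin.last k) := hm.monotone (Fin.le_last _)
              _ = z := hl
              _ < y := (mem_Ico.1 hz).2
          · exact absurd hij (lt_irrefl _)
      · have : (0 : Fin (k + 2)) = Fin.castSucc 0 := rfl
        rw [this, Fin.snoc_castSucc, h0]
      · exact Fin.snoc_last _ _⟩
  left_inv := by
    rintro ⟨c, hm, h0, hl⟩
    ext i
    simp only
    rcases Fin.eq_castSucc_or_eq_last i with ⟨i', rfl⟩ | rfl
    · simp [Fin.snoc_castSucc]
    · simp [Fin.snoc_last, hl]
  right_inv := by
    rintro ⟨⟨z, hz⟩, ⟨c, hm, h0, hl⟩⟩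
    refine Sigma.ext ?_ ?_
    · simp [Fin.snoc_castSucc, hl]
    · rw [Subtype.heq_iff_coe_eq]
      · ext i
        simp [Function.comp, Fin.snoc_castSucc]
      · simp [Fin.snoc_castSucc, hl]

private lemma cc_succ (k : ℕ) (x y : P) :
    cc (k + 1) x y = ∑ z ∈ Ico x y, cc k x z := by
  rw [cc, Nat.card_congr (chainEquiv k x y), nat_card_sigma]
  rw [← Finset.sum_coe_sort (Ico x y) (fun z => cc k x z)]
  rfl

private lemma cc_self_succ (k : ℕ) (x : P) : cc (k + 1) x x = 0 := by
  rw [cc_succ]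
  simp

/-- The alternating sum of chain counts, as a finite sum. -/
private lemma key (x : P) : ∀ n (y : P), (Icc x y).card ≤ n → x ≤ y →
    mu ℤ x y = ∑ k ∈ Finset.range (Fintype.card P + 1), (-1 : ℤ) ^ k * (cc k x y : ℤ) := by
  intro n
  induction n with
  | zero =>
    intro y hn hxy
    exact absurd (Finset.card_pos.2 ⟨x, mem_Icc.2 ⟨le_rfl, hxy⟩⟩) (by omega)
  | succ n ih =>
    intro y hn hxy
    rcases eq_or_lt_of_le hxy with rfl | hlt
    · rw [mu_self]
      rw [Finset.sum_eq_single 0]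
      · simp [cc_zero]
      · rintro (_ | k) _ hk
        · exact absurd rfl hk
        · simp [cc_self_succ]
      · simp
    · have hne : x ≠ y := ne_of_lt hlt
      rw [mu_eq_neg_sum_Ico_of_ne hne]
      have hrec : ∀ z ∈ Ico x y, mu ℤ x z =
          ∑ k ∈ Finset.range (Fintype.card P + 1), (-1 : ℤ) ^ k * (cc k x z : ℤ) := by
        intro z hz
        rw [mem_Ico] at hz
        have hsub : (Icc x z).card < (Icc x y).card :=
          Finset.card_lt_card (Finset.Icc_ssubset_Icc_right (hz.1.trans hz.2.le) le_rfl hz.2)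
        exact ih z (by omega) hz.1
      rw [Finset.sum_congr rfl hrec]
      rw [Finset.sum_comm]
      have : ∀ k ∈ Finset.range (Fintype.card P + 1),
          ∑ z ∈ Ico x y, (-1 : ℤ) ^ k * (cc k x z : ℤ) =
            (-1 : ℤ) ^ k * (cc (k + 1) x y : ℤ) := by
        intro k _
        rw [← Finset.mul_sum, cc_succ]
        push_cast
        ring
      rw [Finset.sum_congr rfl this]
      -- reindex: -∑_{k=0}^{N} (-1)^k c_{k+1} = ∑_{k=0}^{N} (-1)^{k+1} c_{k+1}
      have h0 : cc 0 x y = 0 := by rw [cc_zero, if_neg hne]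
      have hN : cc (Fintype.card P + 1) x y = 0 := cc_vanish _ (by omega) x y
      rw [Finset.sum_range_succ' (fun k => (-1 : ℤ) ^ k * (cc k x y : ℤ)) (Fintype.card P)]
      rw [Finset.sum_range_succ (fun k => (-1 : ℤ) ^ k * (cc (k + 1) x y : ℤ)) (Fintype.card P)]
      simp only [h0, hN, Nat.cast_zero, mul_zero, add_zero, pow_zero, one_mul, neg_add_rev,
        neg_zero, zero_add]
      rw [← Finset.sum_neg_distrib]
      refine Finset.sum_congr rfl fun k _ => ?_
      ring

end Aux

/-- Philip Hall's theorem: the Möbius function of a finite poset is the alternating sum of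
the numbers of chains `x = x₀ < x₁ < ⋯ < x_k = y`. -/
theorem mu_eq_alternating_sum_chains (P : Type*) [PartialOrder P] [Fintype P]
    [LocallyFiniteOrder P] [DecidableEq P] (x y : P) (hxy : x ≤ y) :
    mu ℤ x y = ∑ᶠ k : ℕ, (-1 : ℤ) ^ k *
      (Nat.card {c : Fin (k + 1) → P // StrictMono c ∧ c 0 = x ∧ c (Fin.last k) = y} : ℤ) := by
  have hsupp : (Function.support fun k : ℕ => (-1 : ℤ) ^ k * (cc k x y : ℤ)) ⊆
      ↑(Finset.range (Fintype.card P + 1)) := by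
    intro k hk
    simp only [Function.mem_support] at hk
    simp only [Finset.coe_range, Set.mem_Iio]
    by_contra h
    exact hk (by rw [cc_vanish k (by omega) x y]; simp)
  have := finsum_eq_sum_of_support_subset _ hsupp
  calc mu ℤ x y = ∑ k ∈ Finset.range (Fintype.card P + 1), (-1 : ℤ) ^ k * (cc k x y : ℤ) :=
        key x (Icc x y).card y le_rfl hxy
    _ = _ := by rw [← this]; rfl
end

section
/- Let P be a finite partially ordered set. Then ∑_{x ≤ y in P} μ(x,y) = ∑_{k ≥ 0} (−1)^k c_k, where μ is the Möbius function of the incidence algebra of P and c_k is the total number of chains x_0 < x_1 < ⋯ < x_k of length k in P. (The common value is the Euler characteristic of the order complex of P.) -/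
/-!
Write `η = 1 - ζ` in the incidence algebra of `P`. Since `η x y = -1` for `x < y` and `0`
otherwise, `η ^ k x y` is `(-1) ^ k` times the number of chains `x = c₀ < ⋯ < c_k = y`; no such
chain exists once `k ≥ |P|`, so `η` is nilpotent and `ζ = 1 - η` is inverted by the geometric
series `∑ η ^ k`. Hence `μ x y = ∑ₖ (-1) ^ k c_k(x, y)` (Philip Hall), and summing over all
pairs `x ≤ y` counts every chain of `P` once, by its endpoints.
-/

open Finset IncidenceAlgebra

open scoped Classical in
noncomputable def chains (P : Type*) [PartialOrder P] [Fintype P] (k : ℕ) :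
    Finset (Fin (k + 1) → P) :=
  {c | StrictMono c}

section Chains

variable {P : Type*} [PartialOrder P] [Fintype P]

lemma mem_chains {k : ℕ} {c : Fin (k + 1) → P} : c ∈ chains P k ↔ StrictMono c := by
  simp [chains]

lemma natCard_strictMono_eq_card_chains (k : ℕ) :
    Nat.card {c : Fin (k + 1) → P // StrictMono c} = #(chains P k) := by
  classical
  rw [Nat.card_eq_fintype_card, Fintype.card_subtype, chains]

lemma chains_eq_empty_of_card_le {k : ℕ} (hk : Fintype.card P ≤ k) : chains P k = ∅ := by
  refine eq_empty_of_forall_notMem fun c hc => ?_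
  have := Fintype.card_le_of_injective c (mem_chains.1 hc).injective
  simp only [Fintype.card_fin] at this
  omega

variable [DecidableEq P]

noncomputable def chainsBetween (k : ℕ) (x y : P) : Finset (Fin (k + 1) → P) :=
  {c ∈ chains P k | c 0 = x ∧ c (Fin.last k) = y}

lemma mem_chainsBetween {k : ℕ} {x y : P} {c : Fin (k + 1) → P} :
    c ∈ chainsBetween k x y ↔ StrictMono c ∧ c 0 = x ∧ c (Fin.last k) = y := by
  simp [chainsBetween, mem_chains]

lemma card_chains_eq_sum_card_chainsBetween (k : ℕ) :
    #(chains P k) = ∑ p : P × P, #(chainsBetween k p.1 p.2) := by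
  rw [card_eq_sum_card_fiberwise (f := fun c => (c 0, c (Fin.last k))) (t := univ)
    (fun _ _ => mem_coe.2 (mem_univ _))]
  simp [chainsBetween, Prod.ext_iff]

lemma card_chainsBetween_zero (x y : P) : #(chainsBetween 0 x y) = if x = y then 1 else 0 := by
  split_ifs with h
  · subst h
    rw [card_eq_one]
    refine ⟨fun _ => x, ext fun c => ?_⟩
    simp [mem_chainsBetween, Subsingleton.strictMono, funext_iff, Fin.forall_fin_one]
  · refine card_eq_zero.2 (eq_empty_of_forall_notMem fun c hc => h ?_)
    obtain ⟨-, hx, hy⟩ := mem_chainsBetween.1 hc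
    exact hx.symm.trans hy

lemma card_chainsBetween_succ [LocallyFiniteOrder P] (k : ℕ) (x y : P) :
    #(chainsBetween (k + 1) x y) = ∑ z ∈ Ioc x y, #(chainsBetween k z y) := by
  rw [card_eq_sum_card_fiberwise (f := fun c => c 1) (t := Ioc x y)]
  · refine sum_congr rfl fun z hz => card_nbij' Fin.tail (fun d => Fin.cons x d) ?_ ?_ ?_ ?_
    · intro c hc
      obtain ⟨hc, hz⟩ := mem_filter.1 hc
      obtain ⟨hmono, -, hy⟩ := mem_chainsBetween.1 hc
      refine mem_chainsBetween.2 ⟨hmono.comp Fin.strictMono_succ, hz, ?_⟩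
      rw [Fin.tail, Fin.succ_last, hy]
    · intro d hd
      obtain ⟨hmono, rfl, rfl⟩ := mem_chainsBetween.1 hd
      have hx (j) : x < d j := (mem_Ioc.1 hz).1.trans_le (hmono.monotone (Fin.zero_le j))
      refine mem_filter.2 ⟨mem_chainsBetween.2 ⟨Fin.strictMono_cons.2 ⟨hx, hmono⟩, rfl, ?_⟩, rfl⟩
      simp only [← Fin.succ_last, Fin.cons_succ]
    · intro c hc
      obtain ⟨-, hx, -⟩ := mem_chainsBetween.1 (mem_filter.1 hc).1
      simp only [← hx, Fin.cons_self_tail]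
    · intro d _
      exact Fin.tail_cons _ _
  · intro c hc
    obtain ⟨hmono, rfl, rfl⟩ := mem_chainsBetween.1 (mem_coe.1 hc)
    exact mem_Ioc.2 ⟨hmono Fin.zero_lt_one, hmono.monotone (Fin.le_last _)⟩

end Chains

namespace IncidenceAlgebra

variable {𝕜 α : Type*}

lemma sum_apply [AddCommMonoid 𝕜] [LE α] {ι : Type*} (s : Finset ι)
    (f : ι → IncidenceAlgebra 𝕜 α) (a b : α) : (∑ i ∈ s, f i) a b = ∑ i ∈ s, f i a b :=
  map_sum (⟨⟨fun g => g a b, rfl⟩, fun _ _ => rfl⟩ : IncidenceAlgebra 𝕜 α →+ 𝕜) f s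

variable [Ring 𝕜] [PartialOrder α] [DecidableEq α] [DecidableLE α]

lemma one_sub_zeta_apply [DecidableLT α] (a b : α) :
    (1 - zeta 𝕜 : IncidenceAlgebra 𝕜 α) a b = if a < b then -1 else 0 := by
  rw [sub_apply, one_apply, zeta_apply]
  rcases eq_or_ne a b with rfl | h
  · simp
  · simp only [h, if_false, zero_sub, lt_iff_le_and_ne]
    split_ifs <;> simp_all

variable [LocallyFiniteOrder α] [Fintype α]

lemma pow_one_sub_zeta_apply (k : ℕ) (a b : α) :
    ((1 - zeta 𝕜) ^ k : IncidenceAlgebra 𝕜 α) a b = (-1) ^ k * #(chainsBetween k a b) := by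
  induction k generalizing a with
  | zero => simp [one_apply, card_chainsBetween_zero]
  | succ k ih =>
    classical
    have hIoc : {z ∈ Icc a b | a < z} = Ioc a b := by
      ext z; simp only [mem_filter, mem_Icc, mem_Ioc]; grind
    rw [pow_succ', mul_apply, card_chainsBetween_succ, Nat.cast_sum, mul_sum, ← hIoc, sum_filter]
    refine sum_congr rfl fun z _ => ?_
    rw [one_sub_zeta_apply, ih, pow_succ']
    split_ifs <;> simp

lemma pow_one_sub_zeta_card : (1 - zeta 𝕜 : IncidenceAlgebra 𝕜 α) ^ Fintype.card α = 0 := by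
  ext a b -
  simp [pow_one_sub_zeta_apply, chainsBetween, chains_eq_empty_of_card_le le_rfl, zero_apply]

lemma mu_eq_sum_pow_one_sub_zeta :
    mu 𝕜 = ∑ k ∈ range (Fintype.card α), (1 - zeta 𝕜 : IncidenceAlgebra 𝕜 α) ^ k := by
  set S := ∑ k ∈ range (Fintype.card α), (1 - zeta 𝕜 : IncidenceAlgebra 𝕜 α) ^ k
  have h : zeta 𝕜 * S = 1 := by
    have := mul_neg_geom_sum (1 - zeta 𝕜 : IncidenceAlgebra 𝕜 α) (Fintype.card α)
    rwa [sub_sub_cancel, pow_one_sub_zeta_card, sub_zero] at this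
  calc mu 𝕜 = mu 𝕜 * (zeta 𝕜 * S) := by rw [h, mul_one]
    _ = S := by rw [← mul_assoc, mu_mul_zeta, one_mul]

theorem mu_apply_eq_sum_card_chainsBetween (a b : α) :
    mu 𝕜 a b = ∑ k ∈ range (Fintype.card α), (-1) ^ k * (#(chainsBetween k a b) : 𝕜) := by
  simp only [mu_eq_sum_pow_one_sub_zeta, sum_apply, pow_one_sub_zeta_apply]

end IncidenceAlgebra

/-- For a finite poset, the sum of all Möbius function values `μ(x,y)` over pairs `x ≤ y`
equals the alternating sum of the total numbers of chains of each length: the Euler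
characteristic of the order complex. -/
theorem sum_mu_eq_alternating_sum_chains (P : Type*) [PartialOrder P] [Fintype P]
    [LocallyFiniteOrder P] [DecidableEq P] [DecidableRel ((· ≤ ·) : P → P → Prop)] :
    ∑ p ∈ Finset.univ.filter (fun p : P × P => p.1 ≤ p.2), mu ℤ p.1 p.2 =
      ∑ᶠ k : ℕ, (-1 : ℤ) ^ k * (Nat.card {c : Fin (k + 1) → P // StrictMono c} : ℤ) := by
  simp only [natCard_strictMono_eq_card_chains]
  rw [finsum_eq_sum_of_support_subset _ (s := range (Fintype.card P)) fun k hk => ?_]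
  · calc ∑ p ∈ univ.filter (fun p : P × P => p.1 ≤ p.2), mu ℤ p.1 p.2
        = ∑ p : P × P, mu ℤ p.1 p.2 := sum_filter_of_ne fun _ _ => le_of_ne_zero
      _ = ∑ k ∈ range (Fintype.card P), (-1) ^ k * (#(chains P k) : ℤ) := by
        simp only [mu_apply_eq_sum_card_chainsBetween, card_chains_eq_sum_card_chainsBetween,
          Nat.cast_sum, mul_sum]
        exact sum_comm
  · by_contra hk'
    rw [coe_range, Set.mem_Iio, not_lt] at hk'
    simp [chains_eq_empty_of_card_le hk'] at hk
end

section
/- Let K and L be simplicial sets each with finitely many nondegenerate simplices. Then the product simplicial set K × L also has finitely many nondegenerate simplices, and χ(K × L) = χ(K) · χ(L), where χ denotes the alternating sum of the numbers of nondegenerate simplices. -/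
open CategoryTheory Simplicial Opposite

/-- A simplex of a simplicial set is nondegenerate if it is not in the image of any
degeneracy map. (Every 0-simplex is nondegenerate.) -/
def SSet.Nondeg (K : SSet) : (n : ℕ) → K _⦋n⦌ → Prop
| 0, _ => True
| n + 1, σ => ¬ ∃ (i : Fin (n + 1)) (τ : K _⦋n⦌), σ = K.map (SimplexCategory.σ i).op τ

/-- A simplicial set has finitely many nondegenerate simplices. -/
def SSet.FinNondeg (K : SSet) : Prop :=
  (∀ n : ℕ, {σ : K _⦋n⦌ | K.Nondeg n σ}.Finite) ∧
    ∃ N : ℕ, ∀ n ≥ N, ∀ σ : K _⦋n⦌, ¬ K.Nondeg n σ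

/-- The initial vertex of an `n`-simplex, induced by `[0] → [n]`, `0 ↦ 0`. -/
def SSet.initVertex (K : SSet) (n : ℕ) (σ : K _⦋n⦌) : K _⦋0⦌ :=
  K.map (SimplexCategory.mkHom (OrderHom.const _ (0 : Fin (n + 1)))).op σ

/-- The combinatorial Euler characteristic: the alternating sum of the numbers of
nondegenerate simplices. -/
noncomputable def SSet.chi (K : SSet) : ℤ :=
  ∑ᶠ n : ℕ, (-1 : ℤ) ^ n * (Nat.card {σ : K.obj (op (SimplexCategory.mk n)) // K.Nondeg n σ} : ℤ)

/-- The Möbius function of a simplicial set at a vertex `x`: the alternating sum of the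
numbers of nondegenerate simplices with initial vertex `x`. -/
noncomputable def SSet.mob (K : SSet) (x : K _⦋0⦌) : ℤ :=
  ∑ᶠ n : ℕ, (-1 : ℤ) ^ n *
    (Nat.card {σ : K.obj (op (SimplexCategory.mk n)) // K.Nondeg n σ ∧ K.initVertex n σ = x} : ℤ)
open Limits

/-!
By the Eilenberg–Zilber lemma every `n`-simplex of `X` is uniquely `X.map f.op y` with
`f : ⦋n⦌ ↠ ⦋m⦌` and `y` nondegenerate, and such surjections correspond to their sets of jumps,
the `m`-element subsets of `Fin n`. Hence `|X_n| = ∑ₘ C(n, m) Nₘ(X)`, where `Nₘ(X)` counts the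
nondegenerate `m`-simplices. This is a polynomial `P_X` in `n`, and `P_X(-1) = χ(X)` because
`C(-1, m) = (-1)ᵐ`. As `(K × L)_n = K_n × L_n`, the polynomials `P_{K × L}` and `P_K P_L` agree at
every natural number, so they are equal, and evaluating at `-1` gives `χ(K × L) = χ(K) χ(L)`.
-/

open Finset

namespace SimplexCategory

variable {n p : ℕ}

def rank (s : Finset (Fin n)) (i : Fin (n + 1)) : ℕ := #(s.filter fun j => j.castSucc < i)

lemma rank_succ (s : Finset (Fin n)) (i : Fin n) :
    rank s i.succ = rank s i.castSucc + if i ∈ s then 1 else 0 := by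
  have hsplit (j : Fin n) : (if j ≤ i then 1 else 0) =
      (if j < i then 1 else 0) + if i = j then 1 else 0 := by
    split_ifs <;> omega
  simp only [rank, card_filter, Fin.castSucc_lt_succ_iff, Fin.castSucc_lt_castSucc_iff, hsplit,
    sum_add_distrib, sum_ite_eq]

@[simp]
lemma rank_zero (s : Finset (Fin n)) : rank s 0 = 0 := by
  simp [rank]

lemma rank_last (s : Finset (Fin n)) : rank s (Fin.last n) = #s := by
  simp [rank]

lemma rank_mono (s : Finset (Fin n)) : Monotone (rank s) := fun _ _ h =>
  card_le_card (monotone_filter_right s fun _ _ hj => hj.trans_le h)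

lemma exists_rank_eq (s : Finset (Fin n)) {i : Fin (n + 1)} {k : ℕ} (hk : k ≤ rank s i) :
    ∃ j, rank s j = k := by
  induction i using Fin.induction generalizing k with
  | zero => exact ⟨0, by rw [rank_zero] at hk ⊢; omega⟩
  | succ i ih =>
    rcases hk.eq_or_lt with rfl | hlt
    · exact ⟨_, rfl⟩
    · refine ih ?_
      have := rank_succ s i
      split_ifs at this <;> omega

def jumpSet (f : Fin (n + 1) → Fin (p + 1)) : Finset (Fin n) :=
  univ.filter fun i => f i.castSucc < f i.succ

def ofRank (s : Finset (Fin n)) (hs : #s = p) : Fin (n + 1) →o Fin (p + 1) where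
  toFun i := ⟨rank s i, Nat.lt_succ_of_le (hs ▸ rank_last s ▸ rank_mono s (Fin.le_last i))⟩
  monotone' _ _ h := Fin.mk_le_mk.2 (rank_mono s h)

lemma ofRank_surjective (s : Finset (Fin n)) (hs : #s = p) :
    Function.Surjective (ofRank s hs) := fun k => by
  obtain ⟨i, hi⟩ := exists_rank_eq s (i := Fin.last n) (k := k) (by rw [rank_last]; omega)
  exact ⟨i, Fin.ext hi⟩

lemma jumpSet_ofRank (s : Finset (Fin n)) (hs : #s = p) : jumpSet (ofRank s hs) = s := by
  ext i
  simp only [jumpSet, mem_filter, mem_univ, true_and, Fin.lt_def]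
  change rank s _ < rank s _ ↔ _
  rw [rank_succ]
  split_ifs with h <;> simp [h]

section Surjective

variable {f : Fin (n + 1) →o Fin (p + 1)} (hf : Function.Surjective f)
include hf

lemma apply_zero_of_surjective : f 0 = 0 := by
  obtain ⟨i, hi⟩ := hf 0
  exact le_antisymm (hi ▸ f.monotone (Fin.zero_le i)) (Fin.zero_le _)

lemma apply_last_of_surjective : f (Fin.last n) = Fin.last p := by
  obtain ⟨i, hi⟩ := hf (Fin.last p)
  exact le_antisymm (Fin.le_last _) (hi ▸ f.monotone (Fin.le_last i))

lemma val_succ_le_of_surjective (i : Fin n) : (f i.succ : ℕ) ≤ f i.castSucc + 1 := by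
  by_contra! h
  obtain ⟨j, hj⟩ := hf ⟨f i.castSucc + 1, by omega⟩
  have hj' : (f j : ℕ) = f i.castSucc + 1 := by rw [hj]
  rcases le_or_gt j i.castSucc with hji | hij
  · have := Fin.le_def.1 (f.monotone hji)
    omega
  · have := Fin.le_def.1 (f.monotone (Fin.castSucc_lt_iff_succ_le.1 hij))
    omega

lemma val_eq_rank_jumpSet (i : Fin (n + 1)) : (f i : ℕ) = rank (jumpSet f) i := by
  induction i using Fin.induction with
  | zero => simp [apply_zero_of_surjective hf]
  | succ i ih =>
    have hle := val_succ_le_of_surjective hf i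
    have hmono := Fin.le_def.1 (f.monotone (Fin.castSucc_le_succ i))
    rw [rank_succ, ← ih]
    simp only [jumpSet, mem_filter, mem_univ, true_and, Fin.lt_def]
    split_ifs <;> omega

lemma card_jumpSet : #(jumpSet f) = p := by
  simpa [← rank_last, apply_last_of_surjective hf] using (val_eq_rank_jumpSet hf (Fin.last n)).symm

end Surjective

/-- A monotone surjection `[n] ↠ [p]` increases by at most one at each step, so it is determined
by the set of steps at which it increases. -/
def epiEquivFinset (n p : ℕ) :
    {f : ⦋n⦌ ⟶ ⦋p⦌ // Epi f} ≃ {s : Finset (Fin n) // #s = p} where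
  toFun f := ⟨jumpSet f.1.toOrderHom, card_jumpSet (epi_iff_surjective.1 f.2)⟩
  invFun s := ⟨Hom.mk (ofRank s.1 s.2), epi_iff_surjective.2 (ofRank_surjective s.1 s.2)⟩
  left_inv f := Subtype.ext <| Hom.ext _ _ <| OrderHom.ext _ _ <| funext fun i =>
    Fin.ext (val_eq_rank_jumpSet (epi_iff_surjective.1 f.2) i).symm
  right_inv s := Subtype.ext (jumpSet_ofRank s.1 s.2)

lemma card_epi (n p : ℕ) : Nat.card {f : ⦋n⦌ ⟶ ⦋p⦌ // Epi f} = n.choose p := by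
  rw [Nat.card_congr (epiEquivFinset n p), Nat.card_eq_fintype_card, Fintype.card_finset_len,
    Fintype.card_fin]

end SimplexCategory

universe u

open MonoidalCategory CartesianMonoidalCategory Polynomial
open scoped Nat

noncomputable def Polynomial.choosePoly (m : ℕ) : ℚ[X] := C (m ! : ℚ)⁻¹ * descPochhammer ℚ m

lemma Polynomial.eval_natCast_choosePoly (m n : ℕ) :
    (choosePoly m).eval (n : ℚ) = n.choose m := by
  rw [choosePoly, eval_mul, eval_C, descPochhammer_eval_eq_descFactorial,
    Nat.descFactorial_eq_factorial_mul_choose, Nat.cast_mul, inv_mul_cancel_left₀ (by positivity)]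

lemma descPochhammer_eval_neg_one {R : Type*} [CommRing R] (m : ℕ) :
    (descPochhammer R m).eval (-1) = (-1) ^ m * m ! := by
  induction m with
  | zero => simp
  | succ m ih =>
    rw [descPochhammer_succ_eval, ih]
    push_cast [Nat.factorial_succ]
    ring

lemma Polynomial.eval_neg_one_choosePoly (m : ℕ) : (choosePoly m).eval (-1 : ℚ) = (-1) ^ m := by
  rw [choosePoly, eval_mul, eval_C, descPochhammer_eval_neg_one]
  field_simp

namespace SSet

variable {X : SSet.{u}}

lemma nondeg_iff_mem_nonDegenerate {n : ℕ} (x : X _⦋n⦌) :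
    X.Nondeg n x ↔ x ∈ X.nonDegenerate n := by
  cases n with
  | zero => simp [Nondeg]
  | succ n =>
    simp only [Nondeg, not_exists, mem_nonDegenerate_iff_notMem_degenerate,
      degenerate_eq_iUnion_range_σ, Set.mem_iUnion, Set.mem_range, eq_comm]
    rfl

lemma finNondeg_iff : X.FinNondeg ↔ X.Finite := by
  simp only [FinNondeg, nondeg_iff_mem_nonDegenerate]
  constructor
  · rintro ⟨hfin, d, hd⟩
    have : X.HasDimensionLT d := ⟨fun n hn => by
      ext x
      simpa [← mem_degenerate_iff_notMem_nonDegenerate] using hd n hn x⟩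
    exact X.finite_of_hasDimensionLT d fun i _ => (hfin i).to_subtype
  · intro _
    obtain ⟨d, _⟩ := X.hasDimensionLT_of_finite
    exact ⟨fun n => Set.toFinite _, d, fun n hn x => by
      simp [X.nonDegenerate_eq_empty_of_hasDimensionLT d n hn]⟩

variable (X)

lemma chi_eq_sum (d : ℕ) [X.HasDimensionLT d] :
    X.chi = ∑ m ∈ range d, (-1 : ℤ) ^ m * Nat.card (X.nonDegenerate m) := by
  simp only [chi, nondeg_iff_mem_nonDegenerate]
  refine finsum_eq_sum_of_support_subset _ fun m hm => mem_range.2 (not_le.1 fun hdm => hm ?_)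
  simp [X.nonDegenerate_eq_empty_of_hasDimensionLT d m hdm]

lemma bijective_map_nonDegenerate (d : ℕ) [X.HasDimensionLT d] (n : ℕ) :
    Function.Bijective fun x : Σ m : Fin d, {f : ⦋n⦌ ⟶ ⦋m⦌ // Epi f} × X.nonDegenerate m =>
      X.map x.2.1.1.op x.2.2.1 := by
  constructor
  · rintro ⟨m₁, ⟨f₁, _⟩, y₁⟩ ⟨m₂, ⟨f₂, _⟩, y₂⟩ h
    obtain rfl : m₁ = m₂ := Fin.ext (X.unique_nonDegenerate_dim _ f₁ y₁ rfl f₂ y₂ h)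
    obtain rfl := X.unique_nonDegenerate_map _ f₁ y₁ rfl f₂ y₂ h
    obtain rfl := X.unique_nonDegenerate_simplex _ f₁ y₁ rfl f₁ y₂ h
    rfl
  · intro x
    obtain ⟨m, f, _, y, rfl⟩ := X.exists_nonDegenerate x
    exact ⟨⟨⟨m, X.dim_lt_of_nonDegenerate y d⟩, ⟨f, ‹_›⟩, y⟩, rfl⟩

lemma card_obj_eq_sum [X.Finite] (d : ℕ) [X.HasDimensionLT d] (n : ℕ) :
    Nat.card (X _⦋n⦌) = ∑ m ∈ range d, n.choose m * Nat.card (X.nonDegenerate m) := by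
  rw [← Nat.card_eq_of_bijective _ (X.bijective_map_nonDegenerate d n), Nat.card_sigma,
    ← Fin.sum_univ_eq_sum_range]
  simp [Nat.card_prod, SimplexCategory.card_epi]

lemma exists_poly_eval_card_obj [X.Finite] :
    ∃ P : ℚ[X], (∀ n : ℕ, P.eval (n : ℚ) = Nat.card (X _⦋n⦌)) ∧ P.eval (-1) = X.chi := by
  obtain ⟨d, _⟩ := X.hasDimensionLT_of_finite
  refine ⟨∑ m ∈ range d, (Nat.card (X.nonDegenerate m) : ℚ) • choosePoly m, fun n => ?_, ?_⟩
  · simp [eval_finsetSum, card_obj_eq_sum X d n, eval_natCast_choosePoly, mul_comm]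
  · simp [eval_finsetSum, chi_eq_sum X d, eval_neg_one_choosePoly, mul_comm]

lemma chi_eq_mul_of_card_obj_eq_mul [X.Finite] (Y Z : SSet.{u}) [Y.Finite] [Z.Finite]
    (h : ∀ n : ℕ, Nat.card (X _⦋n⦌) = Nat.card (Y _⦋n⦌) * Nat.card (Z _⦋n⦌)) :
    X.chi = Y.chi * Z.chi := by
  obtain ⟨P, hP, hPχ⟩ := X.exists_poly_eval_card_obj
  obtain ⟨Q, hQ, hQχ⟩ := Y.exists_poly_eval_card_obj
  obtain ⟨R, hR, hRχ⟩ := Z.exists_poly_eval_card_obj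
  have hPQR : P = Q * R := eq_of_infinite_eval_eq _ _ <|
    Set.infinite_of_injective_forall_mem Nat.cast_injective fun n => by simp [hP, hQ, hR, h]
  exact_mod_cast (by rw [← hPχ, ← hQχ, ← hRχ, hPQR, eval_mul] : (X.chi : ℚ) = Y.chi * Z.chi)

variable (K L : SSet.{u})

noncomputable def prodIsoTensor : K ⨯ L ≅ K ⊗ L :=
  limit.isoLimitCone ⟨_, tensorProductIsBinaryProduct K L⟩

instance finite_prod [K.Finite] [L.Finite] : (K ⨯ L).Finite :=
  finite_of_iso (prodIsoTensor K L).symm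

/-- `(K ⊗ L) _⦋n⦌` is definitionally `K _⦋n⦌ × L _⦋n⦌`. -/
lemma card_prod_obj (n : ℕ) :
    Nat.card ((K ⨯ L) _⦋n⦌) = Nat.card (K _⦋n⦌) * Nat.card (L _⦋n⦌) :=
  (Nat.card_congr ((prodIsoTensor K L).app _).toEquiv).trans (Nat.card_prod _ _)

end SSet

/-- The combinatorial Euler characteristic is multiplicative on products of
simplicial sets, which again have finitely many nondegenerate simplices. -/
theorem chi_prod (K L : SSet) (hK : K.FinNondeg) (hL : L.FinNondeg) :
    SSet.FinNondeg (K ⨯ L) ∧ SSet.chi (K ⨯ L) = K.chi * L.chi := by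
  rw [SSet.finNondeg_iff] at hK hL ⊢
  exact ⟨inferInstance, SSet.chi_eq_mul_of_card_obj_eq_mul _ _ _ (SSet.card_prod_obj K L)⟩
end
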